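/- Suppose additionally that N < kmax and that u satisfies (U1) and (U2). Let s = (s_1, s_2) be a strategy profile and t an integer such that either (i) (t, t+1) ∈ T, s_1(t) = o and s_2(t+1) = c, or (ii) (t+1, t) ∈ T, s_2(t) = o and s_1(t+1) = c (i.e., one player goes to the office at some arrival time while the other player goes to the canteen at the arrival time 10 minutes later). Then s is not Pareto optimal over T. -/

import Mathlib

/-- The two actions: `c` (canteen) and `o` (office). -/
inductive Act : Type
  | c : Act
  | o : Act
deriving DecidableEq

open Act

/-- The set of arrival pairs
`T = {(k, k+1) : kmin ≤ k ≤ kmax - 1} ∪ {(k, k-1) : kmin + 1 ≤ k ≤ kmax}`. -/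
noncomputable def T (kmin kmax : ℤ) : Finset (ℤ × ℤ) :=
  ((Finset.Icc kmin (kmax - 1)).image (fun k => (k, k + 1))) ∪
  ((Finset.Icc (kmin + 1) kmax).image (fun k => (k, k - 1)))

/-- Subgame `T1 = {(t1,t2) ∈ T : t1 ≡ kmin (mod 2)}`. -/
noncomputable def T1 (kmin kmax : ℤ) : Finset (ℤ × ℤ) :=
  (T kmin kmax).filter (fun t => t.1 % 2 = kmin % 2)

/-- Subgame `T2 = {(t1,t2) ∈ T : t2 ≡ kmin (mod 2)}`. -/
noncomputable def T2 (kmin kmax : ℤ) : Finset (ℤ × ℤ) :=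
  (T kmin kmax).filter (fun t => t.2 % 2 = kmin % 2)

/-- The expected utility of profile `s` over a set `S` of arrival pairs:
`EU_S(s) = (1/|S|) · Σ_{(t1,t2) ∈ S} u_{(t1,t2)}(s_1(t1), s_2(t2))`. -/
noncomputable def EU (u : ℤ × ℤ → Act → Act → ℝ) (s : (ℤ → Act) × (ℤ → Act))
    (S : Finset (ℤ × ℤ)) : ℝ :=
  (∑ t ∈ S, u t (s.1 t.1) (s.2 t.2)) / S.card

/-- `s` is Pareto optimal over `S` if no profile `s'` has `EU_S(s') > EU_S(s)`. -/
def ParetoOptimal (u : ℤ × ℤ → Act → Act → ℝ) (S : Finset (ℤ × ℤ))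
    (s : (ℤ → Act) × (ℤ → Act)) : Prop :=
  ¬ ∃ s' : (ℤ → Act) × (ℤ → Act), EU u s' S > EU u s S

/-- `u` satisfies conditions (U1) and (U2) on the arrival pairs of `T`. -/
def SatisfiesU1U2 (kmin kmax N : ℤ) (u : ℤ × ℤ → Act → Act → ℝ) : Prop :=
  ∀ t ∈ T kmin kmax,
    (t.1 < N ∧ t.2 < N →
      u t c c > u t o o ∧ u t o o > u t c o ∧ u t c o = u t o c) ∧
    (N ≤ t.1 ∨ N ≤ t.2 →
      u t o o > u t c o ∧ u t c o = u t o c ∧ u t o c = u t c c)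

/-- `u` is uniform with values `A > B > C` (the order is assumed separately). -/
def Uniform (kmin kmax N : ℤ) (u : ℤ × ℤ → Act → Act → ℝ) (A B C : ℝ) : Prop :=
  ∀ t ∈ T kmin kmax,
    (t.1 < N ∧ t.2 < N →
      u t c c = A ∧ u t o o = B ∧ u t c o = C ∧ u t o c = C) ∧
    (N ≤ t.1 ∨ N ≤ t.2 →
      u t o o = B ∧ u t c c = C ∧ u t c o = C ∧ u t o c = C)

/-- The cut-off strategy with cut-off `m`: canteen iff arriving strictly before `m`. -/
def cutoff (m : ℤ) : ℤ → Act := fun k => if k < m then c else o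

/-- The all-office strategy. -/
def allOffice : ℤ → Act := fun _ => o

/-!
The arrival pairs split into two chains, each alternating between the two players along
consecutive arrival times. If, along a chain, the player arriving at `t` goes to the office and
the one arriving at `t + 1` to the canteen, change the chain: when `t + 1 < N`, send everybody
arriving up to `t + 1` to the canteen; otherwise send everybody arriving from `t` on to the
office. The new action is the best one on every pair inside the changed segment and strictly
better on the pair `{t, t + 1}`, while the pairs leaving the segment are untouched because its
end member already takes the new action.
-/

lemma snd_eq_of_mem_T {kmin kmax : ℤ} {p : ℤ × ℤ} (hp : p ∈ T kmin kmax) :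
    p.2 = p.1 + 1 ∨ p.2 = p.1 - 1 := by
  simp only [T, Finset.mem_union, Finset.mem_image] at hp
  rcases hp with ⟨k, -, rfl⟩ | ⟨k, -, rfl⟩ <;> simp

lemma not_paretoOptimal_of_le_of_lt {u : ℤ × ℤ → Act → Act → ℝ} {S : Finset (ℤ × ℤ)}
    {s s' : (ℤ → Act) × (ℤ → Act)}
    (hle : ∀ p ∈ S, u p (s.1 p.1) (s.2 p.2) ≤ u p (s'.1 p.1) (s'.2 p.2))
    (hlt : ∃ p ∈ S, u p (s.1 p.1) (s.2 p.2) < u p (s'.1 p.1) (s'.2 p.2)) :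
    ¬ ParetoOptimal u S s := by
  have hS : (0 : ℝ) < S.card := by
    obtain ⟨p, hp, -⟩ := hlt
    exact_mod_cast Finset.card_pos.mpr ⟨p, hp⟩
  exact fun hPO => hPO ⟨s', div_lt_div_of_pos_right (Finset.sum_lt_sum hle hlt) hS⟩

namespace SatisfiesU1U2

variable {kmin kmax N : ℤ} {u : ℤ × ℤ → Act → Act → ℝ} {p : ℤ × ℤ} {x y : Act}

lemma lt_canteen (hu : SatisfiesU1U2 kmin kmax N u) (hp : p ∈ T kmin kmax) (h1 : p.1 < N)
    (h2 : p.2 < N) (hxy : x = o ∨ y = o) : u p x y < u p c c := by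
  obtain ⟨hco, hoc, hsym⟩ := (hu p hp).1 ⟨h1, h2⟩
  cases x <;> cases y <;> simp at hxy <;> linarith

lemma le_canteen (hu : SatisfiesU1U2 kmin kmax N u) (hp : p ∈ T kmin kmax) (h1 : p.1 < N)
    (h2 : p.2 < N) : u p x y ≤ u p c c := by
  cases x <;> cases y
  all_goals first
    | exact le_rfl
    | exact (hu.lt_canteen hp h1 h2 (by simp)).le

lemma lt_office (hu : SatisfiesU1U2 kmin kmax N u) (hp : p ∈ T kmin kmax)
    (hN : N ≤ p.1 ∨ N ≤ p.2) (hxy : x = c ∨ y = c) : u p x y < u p o o := by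
  obtain ⟨hoc, hsym, hcc⟩ := (hu p hp).2 hN
  cases x <;> cases y <;> simp at hxy <;> linarith

lemma le_office (hu : SatisfiesU1U2 kmin kmax N u) (hp : p ∈ T kmin kmax)
    (hN : N ≤ p.1 ∨ N ≤ p.2) : u p x y ≤ u p o o := by
  cases x <;> cases y
  all_goals first
    | exact le_rfl
    | exact (hu.lt_office hp hN (by simp)).le

end SatisfiesU1U2

/-- The arrival pairs `(a, b)` with `a ≡ r [ZMOD 2]` only link player 1 at times `≡ r` with
player 2 at times `≢ r`; along this chain, `chainAct s r k` is the action taken at time `k`. -/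
def chainAct (s : (ℤ → Act) × (ℤ → Act)) (r k : ℤ) : Act :=
  if k % 2 = r % 2 then s.1 k else s.2 k

def setChain (s : (ℤ → Act) × (ℤ → Act)) (r : ℤ) (P : ℤ → Prop) [DecidablePred P] (x : Act) :
    (ℤ → Act) × (ℤ → Act) :=
  (fun k => if P k ∧ k % 2 = r % 2 then x else s.1 k,
   fun k => if P k ∧ k % 2 ≠ r % 2 then x else s.2 k)

lemma setChain_eq_or {s : (ℤ → Act) × (ℤ → Act)} {r : ℤ} {P : ℤ → Prop} [DecidablePred P]
    {x : Act} (hP : ∀ k, P k → ¬ P (k + 1) ∨ ¬ P (k - 1) → chainAct s r k = x)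
    {a b : ℤ} (hab : b = a + 1 ∨ b = a - 1) :
    ((setChain s r P x).1 a = s.1 a ∧ (setChain s r P x).2 b = s.2 b) ∨
      (P a ∧ P b ∧ (setChain s r P x).1 a = x ∧ (setChain s r P x).2 b = x) := by
  by_cases ha : a % 2 = r % 2
  · have hb : b % 2 ≠ r % 2 := by omega
    by_cases hPa : P a <;> by_cases hPb : P b
    · exact .inr ⟨hPa, hPb, by simp [setChain, hPa, ha], by simp [setChain, hPb, hb]⟩
    · have hxa : s.1 a = x := by
        have := hP a hPa (by rcases hab with rfl | rfl <;> simp [hPb])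
        simpa [chainAct, ha] using this
      exact .inl ⟨by simp [setChain, hPa, ha, hxa], by simp [setChain, hPb]⟩
    · have hxb : s.2 b = x := by
        have := hP b hPb (by rcases hab with rfl | rfl <;> simp [hPa])
        simpa [chainAct, hb] using this
      exact .inl ⟨by simp [setChain, hPa], by simp [setChain, hPb, hb, hxb]⟩
    · exact .inl ⟨by simp [setChain, hPa], by simp [setChain, hPb]⟩
  · have hb : b % 2 = r % 2 := by omega
    exact .inl ⟨by simp [setChain, ha], by simp [setChain, hb]⟩

variable {kmin kmax N : ℤ} {u : ℤ × ℤ → Act → Act → ℝ} {s : (ℤ → Act) × (ℤ → Act)}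
  {p : ℤ × ℤ} {m r : ℤ}

theorem not_paretoOptimal_of_office_below_canteen (hu : SatisfiesU1U2 kmin kmax N u)
    (hm : m < N) (htop : chainAct s r m = c) (hp : p ∈ T kmin kmax) (hpr : p.1 % 2 = r % 2)
    (h1 : p.1 ≤ m) (h2 : p.2 ≤ m) (hbad : s.1 p.1 = o ∨ s.2 p.2 = o) :
    ¬ ParetoOptimal u (T kmin kmax) s := by
  have hP : ∀ k, k ≤ m → ¬ k + 1 ≤ m ∨ ¬ k - 1 ≤ m → chainAct s r k = c := by
    intro k hk hk'
    obtain rfl : k = m := by omega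
    exact htop
  refine not_paretoOptimal_of_le_of_lt (s' := setChain s r (· ≤ m) c) (fun q hq => ?_)
    ⟨p, hp, ?_⟩
  · rcases setChain_eq_or hP (snd_eq_of_mem_T hq) with ⟨e1, e2⟩ | ⟨hq1, hq2, e1, e2⟩
    · rw [e1, e2]
    · rw [e1, e2]
      exact hu.le_canteen hq (by omega) (by omega)
  · have hp2 : p.2 % 2 ≠ r % 2 := by rcases snd_eq_of_mem_T hp with h | h <;> omega
    have e1 : (setChain s r (· ≤ m) c).1 p.1 = c := by simp [setChain, h1, hpr]
    have e2 : (setChain s r (· ≤ m) c).2 p.2 = c := by simp [setChain, h2, hp2]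
    rw [e1, e2]
    exact hu.lt_canteen hp (by omega) (by omega) hbad

theorem not_paretoOptimal_of_canteen_above_office (hu : SatisfiesU1U2 kmin kmax N u)
    (hm : N ≤ m + 1) (hbot : chainAct s r m = o) (hp : p ∈ T kmin kmax)
    (hpr : p.1 % 2 = r % 2) (h1 : m ≤ p.1) (h2 : m ≤ p.2) (hbad : s.1 p.1 = c ∨ s.2 p.2 = c) :
    ¬ ParetoOptimal u (T kmin kmax) s := by
  have hP : ∀ k, m ≤ k → ¬ m ≤ k + 1 ∨ ¬ m ≤ k - 1 → chainAct s r k = o := by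
    intro k hk hk'
    obtain rfl : k = m := by omega
    exact hbot
  refine not_paretoOptimal_of_le_of_lt (s' := setChain s r (m ≤ ·) o) (fun q hq => ?_)
    ⟨p, hp, ?_⟩
  · rcases setChain_eq_or hP (snd_eq_of_mem_T hq) with ⟨e1, e2⟩ | ⟨hq1, hq2, e1, e2⟩
    · rw [e1, e2]
    · rw [e1, e2]
      exact hu.le_office hq (by rcases snd_eq_of_mem_T hq with h | h <;> omega)
  · have hp2 : p.2 % 2 ≠ r % 2 := by rcases snd_eq_of_mem_T hp with h | h <;> omega
    have e1 : (setChain s r (m ≤ ·) o).1 p.1 = o := by simp [setChain, h1, hpr]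
    have e2 : (setChain s r (m ≤ ·) o).2 p.2 = o := by simp [setChain, h2, hp2]
    rw [e1, e2]
    exact hu.lt_office hp (by rcases snd_eq_of_mem_T hp with h | h <;> omega) hbad

theorem stmt_1_general (kmin kmax N : ℤ)
    (u : ℤ × ℤ → Act → Act → ℝ) (hu : SatisfiesU1U2 kmin kmax N u)
    (s : (ℤ → Act) × (ℤ → Act))
    (h : ∃ t : ℤ,
      ((t, t + 1) ∈ T kmin kmax ∧ s.1 t = Act.o ∧ s.2 (t + 1) = Act.c) ∨
      ((t + 1, t) ∈ T kmin kmax ∧ s.2 t = Act.o ∧ s.1 (t + 1) = Act.c)) :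
    ¬ ParetoOptimal u (T kmin kmax) s := by
  obtain ⟨t, ⟨hmem, ho, hc⟩ | ⟨hmem, ho, hc⟩⟩ := h
  · have hc' : chainAct s t (t + 1) = c := by rw [chainAct, if_neg (by omega), hc]
    have ho' : chainAct s t t = o := by rw [chainAct, if_pos rfl, ho]
    rcases lt_or_ge (t + 1) N with hN | hN
    · exact not_paretoOptimal_of_office_below_canteen hu hN hc' hmem rfl (by omega) le_rfl
        (.inl ho)
    · exact not_paretoOptimal_of_canteen_above_office hu hN ho' hmem rfl le_rfl (by omega)
        (.inr hc)
  · have hc' : chainAct s (t + 1) (t + 1) = c := by rw [chainAct, if_pos rfl, hc]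
    have ho' : chainAct s (t + 1) t = o := by rw [chainAct, if_neg (by omega), ho]
    rcases lt_or_ge (t + 1) N with hN | hN
    · exact not_paretoOptimal_of_office_below_canteen hu hN hc' hmem rfl le_rfl (by omega)
        (.inr ho)
    · exact not_paretoOptimal_of_canteen_above_office hu hN ho' hmem rfl (by omega) le_rfl
        (.inl hc)

/-- If one player goes to the office at some arrival time while the other
player goes to the canteen at the arrival time 10 minutes later, then the profile is
not Pareto optimal over `T`. -/
theorem stmt_1 (kmin kmax N : ℤ) (h1 : kmin < N) (h2 : N ≤ kmax) (h3 : N < kmax)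
    (u : ℤ × ℤ → Act → Act → ℝ) (hu : SatisfiesU1U2 kmin kmax N u)
    (s : (ℤ → Act) × (ℤ → Act))
    (h : ∃ t : ℤ,
      ((t, t + 1) ∈ T kmin kmax ∧ s.1 t = Act.o ∧ s.2 (t + 1) = Act.c) ∨
      ((t + 1, t) ∈ T kmin kmax ∧ s.2 t = Act.o ∧ s.1 (t + 1) = Act.c)) :
    ¬ ParetoOptimal u (T kmin kmax) s :=
  stmt_1_general kmin kmax N u hu s h
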